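/- arXiv:2602.07253 — 2 statements merged into one kernel-verified Lean document; each statement's English description precedes it below -/
import Mathlib

section
/- Let V be a finite label set with weight vectors w_v ∈ R^d and biases b_v, z ∈ R^d, and ĉ the unique argmax of v ↦ w_v^T z + b_v. Define for each c ≠ ĉ (with w_c ≠ w_ĉ) the hyperplane distance D̃(c) = |(w_ĉ - w_c)^T z + (b_ĉ - b_c)| / ‖w_ĉ - w_c‖₂. Let c₂ be a minimizer of D̃ over c ≠ ĉ, and let p be the orthogonal projection of z onto the hyperplane {z' : (w_ĉ - w_{c₂})^T z' + (b_ĉ - b_{c₂}) = 0}. Then p lies in the closure of the decision region R_{c₂} = {z' : w_{c₂}^T z' + b_{c₂} > w_v^T z' + b_v for all v ≠ c₂}, provided that for every c ≠ ĉ, c₂ the strict inequality D̃(c) > D̃(c₂) holds; consequently inf_{z' ∈ R_{c₂}} ‖z - z'‖₂ = D̃(c₂). -/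
/-- if `c₂` attains the strict minimum of the pairwise hyperplane
distances `D̃(c)` among `c ≠ ĉ`, then the orthogonal projection `p` of `z`
onto the pairwise hyperplane between `ĉ` and `c₂` lies in the closure of the
decision region of `c₂`; consequently the distance from `z` to that decision
region equals `D̃(c₂)`. -/
theorem stmt_2 {d : ℕ} {V : Type*} [Fintype V]
    (w : V → EuclideanSpace ℝ (Fin d)) (b : V → ℝ)
    (z : EuclideanSpace ℝ (Fin d)) (chat : V)
    (hmax : ∀ v : V, v ≠ chat → (inner ℝ (w v) z : ℝ) + b v < (inner ℝ (w chat) z : ℝ) + b chat)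
    (hw : ∀ c : V, c ≠ chat → w c ≠ w chat)
    (Dt : V → ℝ)
    (hDt : ∀ c : V, c ≠ chat →
      Dt c = |(inner ℝ (w chat - w c) z : ℝ) + (b chat - b c)| / ‖w chat - w c‖)
    (c₂ : V) (hc₂ : c₂ ≠ chat)
    (hstrict : ∀ c : V, c ≠ chat → c ≠ c₂ → Dt c₂ < Dt c)
    (p : EuclideanSpace ℝ (Fin d))
    (hp : p = z - (((inner ℝ (w chat - w c₂) z : ℝ) + (b chat - b c₂)) / ‖w chat - w c₂‖ ^ 2) •
      (w chat - w c₂))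
    (hne : ({z' : EuclideanSpace ℝ (Fin d) |
        ∀ v : V, v ≠ c₂ → (inner ℝ (w v) z' : ℝ) + b v < (inner ℝ (w c₂) z' : ℝ) + b c₂}).Nonempty) :
    p ∈ closure {z' : EuclideanSpace ℝ (Fin d) |
        ∀ v : V, v ≠ c₂ → (inner ℝ (w v) z' : ℝ) + b v < (inner ℝ (w c₂) z' : ℝ) + b c₂} ∧
    Metric.infDist z {z' : EuclideanSpace ℝ (Fin d) |
        ∀ v : V, v ≠ c₂ → (inner ℝ (w v) z' : ℝ) + b v < (inner ℝ (w c₂) z' : ℝ) + b c₂} =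
      Dt c₂ := by
  classical
  set S := {z' : EuclideanSpace ℝ (Fin d) |
      ∀ v : V, v ≠ c₂ → (inner ℝ (w v) z' : ℝ) + b v < (inner ℝ (w c₂) z' : ℝ) + b c₂} with hS
  set u : EuclideanSpace ℝ (Fin d) := w chat - w c₂ with hu
  have hune : u ≠ 0 := sub_ne_zero.mpr fun h => hw c₂ hc₂ h.symm
  have hun : (0:ℝ) < ‖u‖ := norm_pos_iff.mpr hune
  set α : ℝ := (inner ℝ u z : ℝ) + (b chat - b c₂) with hα
  have hαpos : 0 < α := by
    have h := hmax c₂ hc₂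
    have : (inner ℝ u z : ℝ) = inner ℝ (w chat) z - inner ℝ (w c₂) z := inner_sub_left _ _ _
    rw [hα, this]; linarith
  have hDc₂ : Dt c₂ = α / ‖u‖ := by
    rw [hDt c₂ hc₂, ← hu, ← hα, abs_of_pos hαpos]
  -- inner ℝ u p = inner ℝ u z - α
  have hip : (inner ℝ u p : ℝ) = (inner ℝ u z : ℝ) - α := by
    rw [hp, inner_sub_right, real_inner_smul_right,
      real_inner_self_eq_norm_sq]
    field_simp
  -- f_chat(p) = f_c₂(p)
  have heq : (inner ℝ (w chat) p : ℝ) + b chat = (inner ℝ (w c₂) p : ℝ) + b c₂ := by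
    have : (inner ℝ u p : ℝ) = inner ℝ (w chat) p - inner ℝ (w c₂) p := inner_sub_left _ _ _
    rw [this] at hip; linarith [hip]
  -- dist z p = α / ‖u‖
  have hzp : dist z p = α / ‖u‖ := by
    rw [dist_eq_norm, hp]
    have : z - (z - (α / ‖u‖ ^ 2) • u) = (α / ‖u‖ ^ 2) • u := by abel
    rw [this, norm_smul, Real.norm_eq_abs, abs_of_pos (by positivity)]
    field_simp
  -- closed-region membership: ∀ v ≠ c₂, f_v(p) ≤ f_c₂(p)
  have hpcl : ∀ v : V, v ≠ c₂ → (inner ℝ (w v) p : ℝ) + b v ≤ (inner ℝ (w c₂) p : ℝ) + b c₂ := by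
    intro v hv
    by_cases hvchat : v = chat
    · subst hvchat; exact le_of_eq heq
    · set uv : EuclideanSpace ℝ (Fin d) := w chat - w v with huv
      have huvne : uv ≠ 0 := sub_ne_zero.mpr fun h => hw v hvchat h.symm
      have huvn : (0:ℝ) < ‖uv‖ := norm_pos_iff.mpr huvne
      set αv : ℝ := (inner ℝ uv z : ℝ) + (b chat - b v) with hαv
      have hαvpos : 0 < αv := by
        have h := hmax v hvchat
        have : (inner ℝ uv z : ℝ) = inner ℝ (w chat) z - inner ℝ (w v) z := inner_sub_left _ _ _
        rw [hαv, this]; linarith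
      have hDv : Dt v = αv / ‖uv‖ := by
        rw [hDt v hvchat, ← huv, ← hαv, abs_of_pos hαvpos]
      have hlt : α / ‖u‖ < αv / ‖uv‖ := by
        have := hstrict v hvchat hv
        rwa [hDc₂, hDv] at this
      -- inner ℝ uv (z - p) ≤ ‖uv‖ * ‖z - p‖ = ‖uv‖ * (α/‖u‖) < αv
      have hcs : (inner ℝ uv (z - p) : ℝ) ≤ ‖uv‖ * ‖z - p‖ := real_inner_le_norm _ _
      have hnzp : ‖z - p‖ = α / ‖u‖ := by rw [← dist_eq_norm, hzp]
      have hbound : (inner ℝ uv (z - p) : ℝ) < αv := by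
        calc (inner ℝ uv (z - p) : ℝ) ≤ ‖uv‖ * (α / ‖u‖) := by rw [← hnzp]; exact hcs
          _ < ‖uv‖ * (αv / ‖uv‖) := by exact mul_lt_mul_of_pos_left hlt huvn
          _ = αv := by field_simp
      -- so f_chat(p) - f_v(p) = αv - inner ℝ uv (z-p) > 0
      have h1 : (inner ℝ uv p : ℝ) = inner ℝ uv z - inner ℝ uv (z - p) := by
        rw [inner_sub_right]; ring
      have h2 : (inner ℝ uv p : ℝ) = inner ℝ (w chat) p - inner ℝ (w v) p := inner_sub_left _ _ _
      have h3 : (inner ℝ uv z : ℝ) = αv - (b chat - b v) := by rw [hαv]; ring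
      have : (inner ℝ (w v) p : ℝ) + b v < (inner ℝ (w chat) p : ℝ) + b chat := by
        rw [h2, h3] at h1; linarith
      linarith [heq]
  have hpc : p ∈ closure S := by
    obtain ⟨q, hq⟩ := hne
    have htend : Filter.Tendsto (fun n : ℕ => p + ((1:ℝ)/(n+1)) • (q - p))
        Filter.atTop (nhds p) := by
      have h0 : Filter.Tendsto (fun n : ℕ => ((1:ℝ)/(n+1))) Filter.atTop (nhds 0) :=
        tendsto_one_div_add_atTop_nhds_zero_nat
      have := (h0.smul_const (q - p)).const_add p
      simpa using this
    apply mem_closure_of_tendsto htend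
    filter_upwards with n
    intro v hv
    have htpos : (0:ℝ) < 1/(n+1) := by positivity
    have htle : (1:ℝ)/(n+1) ≤ 1 := by
      rw [div_le_one (by positivity)]; linarith [Nat.cast_nonneg (α := ℝ) n]
    set t : ℝ := 1/(n+1)
    have hq' := hq v hv
    have hp' := hpcl v hv
    have hexp : ∀ x : EuclideanSpace ℝ (Fin d),
        (inner ℝ x (p + t • (q - p)) : ℝ) = inner ℝ x p + t * (inner ℝ x q - inner ℝ x p) := by
      intro x
      rw [inner_add_right, real_inner_smul_right, inner_sub_right]
    show (inner ℝ (w v) (p + t • (q - p)) : ℝ) + b v < (inner ℝ (w c₂) (p + t • (q - p)) : ℝ) + b c₂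
    rw [hexp (w v), hexp (w c₂)]
    nlinarith [hq', hp']
  refine ⟨hpc, ?_⟩
  · rw [hDc₂]
    apply le_antisymm
    · have h1 : Metric.infDist z (closure S) ≤ dist z p := by
        exact Metric.infDist_le_dist_of_mem hpc
      rwa [Metric.infDist_closure, hzp] at h1
    · by_contra h
      push_neg at h
      obtain ⟨y, hy, hylt⟩ := (Metric.infDist_lt_iff hne).mp h
      have hchaty := hy chat (Ne.symm hc₂)
      have hiu : (inner ℝ u (z - y) : ℝ) = inner ℝ (w chat) z - inner ℝ (w c₂) z
          - (inner ℝ (w chat) y - inner ℝ (w c₂) y) := by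
        rw [inner_sub_right, inner_sub_left, inner_sub_left]
      have hgy : α < (inner ℝ u (z - y) : ℝ) := by
        have hiz : (inner ℝ u z : ℝ) = inner ℝ (w chat) z - inner ℝ (w c₂) z := inner_sub_left _ _ _
        rw [hiu, hα, hiz]; linarith
      have hcs : (inner ℝ u (z - y) : ℝ) ≤ ‖u‖ * ‖z - y‖ := real_inner_le_norm _ _
      have : α < ‖u‖ * dist z y := by
        rw [dist_eq_norm]; linarith
      have h2 : α / ‖u‖ < dist z y := by
        rw [div_lt_iff₀ hun]; linarith [this]
      linarith
end

section
/- Let V be a finite label set, w_v ∈ R^d, b_v ∈ R, and z ∈ R^d with ĉ the unique argmax of v ↦ w_v^T z + b_v. Suppose for all c ≠ ĉ that w_c ≠ w_ĉ. Then the distance from z to the boundary of the decision region R_ĉ = {z' : w_ĉ^T z' + b_ĉ > w_v^T z' + b_v ∀ v ≠ ĉ} equals min over c ≠ ĉ of |(w_ĉ - w_c)^T z + (b_ĉ - b_c)| / ‖w_ĉ - w_c‖₂, provided the minimizing c₂ satisfies that its pairwise hyperplane is strictly closer to z than all other pairwise hyperplanes. -/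
open Metric Set

/-- the distance from `z` to the boundary (topological frontier)
of the decision region of the unique argmax token `ĉ` equals the minimum over
`c ≠ ĉ` of the pairwise hyperplane distances
`|⟪w_ĉ - w_c, z⟫ + (b_ĉ - b_c)| / ‖w_ĉ - w_c‖`, provided the minimizing `c₂`
is a strict minimizer. -/
theorem stmt_9 {d : ℕ} {V : Type*} [Fintype V]
    (w : V → EuclideanSpace ℝ (Fin d)) (b : V → ℝ)
    (z : EuclideanSpace ℝ (Fin d)) (chat : V)
    (hmax : ∀ v : V, v ≠ chat → (inner ℝ (w v) z : ℝ) + b v < (inner ℝ (w chat) z : ℝ) + b chat)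
    (hw : ∀ c : V, c ≠ chat → w c ≠ w chat)
    (Dt : V → ℝ)
    (hDt : ∀ c : V, c ≠ chat →
      Dt c = |(inner ℝ (w chat - w c) z : ℝ) + (b chat - b c)| / ‖w chat - w c‖)
    (c₂ : V) (hc₂ : c₂ ≠ chat)
    (hstrict : ∀ c : V, c ≠ chat → c ≠ c₂ → Dt c₂ < Dt c) :
    Metric.infDist z
        (frontier {z' : EuclideanSpace ℝ (Fin d) |
          ∀ v : V, v ≠ chat → (inner ℝ (w v) z' : ℝ) + b v < (inner ℝ (w chat) z' : ℝ) + b chat}) =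
      Dt c₂ := by
  classical
  set S : Set (EuclideanSpace ℝ (Fin d)) :=
    {z' | ∀ v : V, v ≠ chat → (inner ℝ (w v) z' : ℝ) + b v < (inner ℝ (w chat) z' : ℝ) + b chat}
    with hS
  -- positivity of the margins
  have hg : ∀ c : V, c ≠ chat → (0:ℝ) < (inner ℝ (w chat - w c) z : ℝ) + (b chat - b c) := by
    intro c hc
    have := hmax c hc
    rw [inner_sub_left]
    linarith
  have hna : ∀ c : V, c ≠ chat → (0:ℝ) < ‖w chat - w c‖ := by
    intro c hc
    rw [norm_pos_iff, sub_ne_zero]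
    exact fun h => hw c hc h.symm
  have hDt' : ∀ c : V, c ≠ chat →
      Dt c = ((inner ℝ (w chat - w c) z : ℝ) + (b chat - b c)) / ‖w chat - w c‖ := by
    intro c hc
    rw [hDt c hc, abs_of_pos (hg c hc)]
  have hDtpos : ∀ c : V, c ≠ chat → 0 < Dt c := by
    intro c hc
    rw [hDt' c hc]
    exact div_pos (hg c hc) (hna c hc)
  have hDtle : ∀ c : V, c ≠ chat → Dt c₂ ≤ Dt c := by
    intro c hc
    rcases eq_or_ne c c₂ with rfl | hne
    · exact le_refl _
    · exact (hstrict c hc hne).le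
  -- Lower-bound key lemma: any point outside S is at distance ≥ Dt c₂
  have key : ∀ y : EuclideanSpace ℝ (Fin d), y ∉ S → Dt c₂ ≤ dist z y := by
    intro y hy
    simp only [hS, Set.mem_setOf_eq, not_forall] at hy
    obtain ⟨c, hc, hcy⟩ := hy
    rw [not_lt] at hcy
    have h2 : (inner ℝ (w chat - w c) y : ℝ) + (b chat - b c) ≤ 0 := by
      rw [inner_sub_left]; linarith
    have h3 : (inner ℝ (w chat - w c) (z - y) : ℝ) ≤ ‖w chat - w c‖ * ‖z - y‖ :=
      real_inner_le_norm _ _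
    rw [inner_sub_right] at h3
    have h4 : Dt c ≤ dist z y := by
      rw [hDt' c hc, div_le_iff₀ (hna c hc), dist_eq_norm, mul_comm]
      linarith
    exact (hDtle c hc).trans h4
  -- openness of S
  have hSopen : IsOpen S := by
    have hrw : S = ⋂ v : V, {z' : EuclideanSpace ℝ (Fin d) |
        v ≠ chat → (inner ℝ (w v) z' : ℝ) + b v < (inner ℝ (w chat) z' : ℝ) + b chat} := by
      ext z'
      simp [hS, Set.mem_iInter]
    rw [hrw]
    refine isOpen_iInter_of_finite fun v => ?_
    by_cases hv : v = chat
    · simp [hv]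
    · have : {z' : EuclideanSpace ℝ (Fin d) |
          v ≠ chat → (inner ℝ (w v) z' : ℝ) + b v < (inner ℝ (w chat) z' : ℝ) + b chat}
          = {z' : EuclideanSpace ℝ (Fin d) |
            (inner ℝ (w v) z' : ℝ) + b v < (inner ℝ (w chat) z' : ℝ) + b chat} := by
        ext z'; simp [hv]
      rw [this]
      exact isOpen_lt (((continuous_const.inner continuous_id).add continuous_const))
        (((continuous_const.inner continuous_id).add continuous_const))
  -- the family of points moving from z towards the nearest hyperplane
  set a : EuclideanSpace ℝ (Fin d) := w chat - w c₂ with haa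
  set D : ℝ := (inner ℝ a z : ℝ) + (b chat - b c₂) with hDdef
  have hD0 : 0 < D := hg c₂ hc₂
  have hna2 : (0:ℝ) < ‖a‖ := hna c₂ hc₂
  set q : ℝ → EuclideanSpace ℝ (Fin d) := fun u => z - ((u * D / ‖a‖^2) • a) with hq
  have hDtc₂ : Dt c₂ = D / ‖a‖ := hDt' c₂ hc₂
  have hdistq : ∀ u : ℝ, 0 ≤ u → dist z (q u) = u * Dt c₂ := by
    intro u hu
    have : z - q u = (u * D / ‖a‖^2) • a := by simp [hq]
    rw [dist_eq_norm, this, norm_smul, Real.norm_eq_abs, abs_of_nonneg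
      (by positivity), hDtc₂]
    field_simp
  -- inner product of each normal with q u
  have hval : ∀ (u : ℝ) (c : V), 0 ≤ u → c ≠ chat →
      ‖w chat - w c‖ * (Dt c - u * Dt c₂) ≤ (inner ℝ (w chat - w c) (q u) : ℝ) + (b chat - b c) := by
    intro u c hu hc
    have hinq : (inner ℝ (w chat - w c) (q u) : ℝ)
        = (inner ℝ (w chat - w c) z : ℝ) - (u * D / ‖a‖^2) * (inner ℝ (w chat - w c) a : ℝ) := by
      simp [hq, inner_sub_right, inner_smul_right]
    have hCS : (inner ℝ (w chat - w c) a : ℝ) ≤ ‖w chat - w c‖ * ‖a‖ := real_inner_le_norm _ _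
    have ht0 : (0:ℝ) ≤ u * D / ‖a‖^2 := by positivity
    have hmul : (u * D / ‖a‖^2) * (inner ℝ (w chat - w c) a : ℝ)
        ≤ (u * D / ‖a‖^2) * (‖w chat - w c‖ * ‖a‖) := by
      exact mul_le_mul_of_nonneg_left hCS ht0
    have hsimp : (u * D / ‖a‖^2) * (‖w chat - w c‖ * ‖a‖) = ‖w chat - w c‖ * (u * Dt c₂) := by
      rw [hDtc₂]; field_simp
    have hgc : (inner ℝ (w chat - w c) z : ℝ) + (b chat - b c) = ‖w chat - w c‖ * Dt c := by
      rw [hDt' c hc]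
      field_simp [(hna c hc).ne']
    rw [hinq]
    rw [hsimp] at hmul
    nlinarith [hmul, hgc]
  -- points strictly between are in S
  have hqmem : ∀ u : ℝ, 0 ≤ u → u < 1 → q u ∈ S := by
    intro u hu hu1 v hv
    have h := hval u v hu hv
    have hcase : u * Dt c₂ < Dt v := by
      rcases eq_or_ne v c₂ with h | hne
      · rw [h]; nlinarith [hDtpos c₂ hc₂]
      · nlinarith [hDtpos c₂ hc₂, hstrict v hv hne]
    have hpos : 0 < ‖w chat - w v‖ * (Dt v - u * Dt c₂) :=
      mul_pos (hna v hv) (by linarith)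
    have : (0:ℝ) < (inner ℝ (w chat - w v) (q u) : ℝ) + (b chat - b v) := lt_of_lt_of_le hpos h
    rw [inner_sub_left] at this
    linarith
  -- q 1 is on the c₂-hyperplane, hence not in S
  have hq1 : (inner ℝ a (q 1) : ℝ) + (b chat - b c₂) = 0 := by
    have h1 : (inner ℝ a (q 1) : ℝ) = (inner ℝ a z : ℝ) - (1 * D / ‖a‖^2) * (inner ℝ a a : ℝ) := by
      simp [hq, inner_sub_right, inner_smul_right]
    have h2 : (inner ℝ a a : ℝ) = ‖a‖^2 := real_inner_self_eq_norm_sq a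
    have h3 : (1 * D / ‖a‖^2) * ‖a‖^2 = D := by field_simp
    rw [h1, h2, h3, hDdef]
    ring
  have hq1notS : q 1 ∉ S := by
    intro h
    have h2 := h c₂ hc₂
    have h3 : (0:ℝ) < (inner ℝ a (q 1) : ℝ) + (b chat - b c₂) := by
      rw [haa, inner_sub_left]
      linarith
    linarith
  -- q 1 is in the closure of S
  have hqcont : Continuous q := by
    apply continuous_const.sub
    exact (((continuous_id.mul continuous_const).div_const _).smul continuous_const)
  have hq1closure : q 1 ∈ closure S := by
    have htend : Filter.Tendsto q (nhdsWithin 1 (Set.Iio 1)) (nhds (q 1)) :=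
      (hqcont.tendsto 1).mono_left nhdsWithin_le_nhds
    refine mem_closure_of_tendsto htend ?_
    filter_upwards [Ico_mem_nhdsLT (by norm_num : (0:ℝ) < 1)] with u hu
    exact hqmem u hu.1 hu.2
  have hpfr : q 1 ∈ frontier S := by
    rw [hSopen.frontier_eq]
    exact ⟨hq1closure, hq1notS⟩
  have hub : infDist z (frontier S) ≤ Dt c₂ := by
    have h := infDist_le_dist_of_mem (x := z) hpfr
    rwa [hdistq 1 zero_le_one, one_mul] at h
  have hlb : Dt c₂ ≤ infDist z (frontier S) := by
    by_contra h
    rw [not_le, infDist_lt_iff ⟨q 1, hpfr⟩] at h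
    obtain ⟨y, hy, hdy⟩ := h
    have hynotS : y ∉ S := by
      rw [hSopen.frontier_eq] at hy; exact hy.2
    exact absurd hdy (not_lt.mpr (key y hynotS))
  linarith
end
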